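/- arXiv:2001.05202 — 7 statements merged into one kernel-verified Lean document; each statement's English description precedes it below -/
import Mathlib

section
/- The Bregman distance D_h satisfies the generalized translation invariant property with exponent γ restricted to θ ∈ [0,1] (i.e., D_h(u + θ(v-w), u) ≤ θ^γ D_h(v,w) for all u,v,w and θ ∈ [0,1]) if and only if it satisfies the triangle scaling property (i.e., D_h((1-θ)u + θv, (1-θ)u + θw) ≤ θ^γ D_h(v,w) for all u,v,w and θ ∈ [0,1]). -/
/-!
For `θ < 1` the substitution `x = (1 - θ) • u + θ • w` is a bijection of the space and turns the pair
`((1 - θ) • u + θ • v, (1 - θ) • u + θ • w)` into `(x + θ • (v - w), x)`, so for those `θ` the two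
properties are the same family of inequalities. At `θ = 1` the triangle scaling inequality is
trivial, and the translation inequality follows from the case `θ < 1` by continuity of `h`.
-/

noncomputable def breg {N : ℕ} (h : EuclideanSpace ℝ (Fin N) → ℝ)
    (h' : EuclideanSpace ℝ (Fin N) → EuclideanSpace ℝ (Fin N))
    (x y : EuclideanSpace ℝ (Fin N)) : ℝ :=
  h x - h y - (inner ℝ (h' y) (x - y) : ℝ)

open Set

section ScalingProperties

variable {E : Type*} [AddCommGroup E] [Module ℝ E]

def TranslationInvariantOn (D : E → E → ℝ) (γ : ℝ) (s : Set ℝ) : Prop :=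
  ∀ (u v w : E) (θ : ℝ), θ ∈ s → D (u + θ • (v - w)) u ≤ θ ^ γ * D v w

def TriangleScalingOn (D : E → E → ℝ) (γ : ℝ) (s : Set ℝ) : Prop :=
  ∀ (u v w : E) (θ : ℝ), θ ∈ s →
    D ((1 - θ) • u + θ • v) ((1 - θ) • u + θ • w) ≤ θ ^ γ * D v w

variable {D : E → E → ℝ} {γ : ℝ} {s : Set ℝ}

theorem TranslationInvariantOn.triangleScalingOn (H : TranslationInvariantOn D γ s) :
    TriangleScalingOn D γ s := by
  intro u v w θ hθ
  have hv : (1 - θ) • u + θ • v = ((1 - θ) • u + θ • w) + θ • (v - w) := by module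
  rw [hv]
  exact H _ v w θ hθ

theorem exists_smul_add_smul_eq_add_smul_sub {θ : ℝ} (hθ : θ ≠ 1) (u v w : E) :
    ∃ x : E, (1 - θ) • x + θ • v = u + θ • (v - w) ∧ (1 - θ) • x + θ • w = u := by
  have hx : (1 - θ) • (1 - θ)⁻¹ • (u - θ • w) = u - θ • w :=
    smul_inv_smul₀ (sub_ne_zero.2 hθ.symm) _
  exact ⟨(1 - θ)⁻¹ • (u - θ • w), by rw [hx]; module, by rw [hx]; module⟩

theorem TriangleScalingOn.translationInvariantOn_sdiff (H : TriangleScalingOn D γ s) :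
    TranslationInvariantOn D γ (s \ {1}) := by
  intro u v w θ ⟨hθ, hθ1⟩
  obtain ⟨x, hv, hw⟩ := exists_smul_add_smul_eq_add_smul_sub hθ1 u v w
  simpa only [hv, hw] using H x v w θ hθ

variable [TopologicalSpace E] [IsTopologicalAddGroup E] [ContinuousSMul ℝ E]

theorem TranslationInvariantOn.Icc_of_Ico (hD : ∀ y, Continuous fun x => D x y)
    (H : TranslationInvariantOn D γ (Ico 0 1)) : TranslationInvariantOn D γ (Icc 0 1) := by
  intro u v w θ hθ
  rcases hθ.2.lt_or_eq with hlt | rfl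
  · exact H u v w θ ⟨hθ.1, hlt⟩
  · refine ContinuousWithinAt.closure_le (s := Ico 0 1) ?_ ?_ ?_ (fun t ht => H u v w t ht)
    · rw [closure_Ico zero_ne_one]
      exact right_mem_Icc.2 zero_le_one
    · exact ((hD u).comp (by fun_prop)).continuousWithinAt
    · exact ((Real.continuousAt_rpow_const 1 γ (Or.inl one_ne_zero)).mul
        continuousAt_const).continuousWithinAt

end ScalingProperties

theorem continuous_breg_left {N : ℕ} {h : EuclideanSpace ℝ (Fin N) → ℝ}
    (h' : EuclideanSpace ℝ (Fin N) → EuclideanSpace ℝ (Fin N)) (hh : Continuous h)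
    (y : EuclideanSpace ℝ (Fin N)) : Continuous fun x => breg h h' x y := by
  unfold breg
  fun_prop

theorem gti_iff_tsp_general (N : ℕ) (γ : ℝ)
    (h : EuclideanSpace ℝ (Fin N) → ℝ)
    (h' : EuclideanSpace ℝ (Fin N) → EuclideanSpace ℝ (Fin N))
    (hgrad : ∀ x, HasGradientAt h (h' x) x) :
    (∀ (u v w : EuclideanSpace ℝ (Fin N)) (θ : ℝ), θ ∈ Set.Icc (0:ℝ) 1 →
        breg h h' (u + θ • (v - w)) u ≤ θ ^ γ * breg h h' v w) ↔
      (∀ (u v w : EuclideanSpace ℝ (Fin N)) (θ : ℝ), θ ∈ Set.Icc (0:ℝ) 1 →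
        breg h h' ((1 - θ) • u + θ • v) ((1 - θ) • u + θ • w) ≤ θ ^ γ * breg h h' v w) := by
  show TranslationInvariantOn (breg h h') γ (Icc 0 1) ↔ TriangleScalingOn (breg h h') γ (Icc 0 1)
  have hcont : Continuous h := Differentiable.continuous fun x => (hgrad x).differentiableAt
  refine ⟨TranslationInvariantOn.triangleScalingOn, fun H => ?_⟩
  refine TranslationInvariantOn.Icc_of_Ico (continuous_breg_left h' hcont) ?_
  simpa only [Icc_sdiff_right] using H.translationInvariantOn_sdiff

/-- The generalized translation invariant property restricted to `θ ∈ [0,1]`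
is equivalent to the triangle scaling property. -/
theorem gti_iff_tsp (N : ℕ) (γ : ℝ) (hγ : 0 < γ)
    (h : EuclideanSpace ℝ (Fin N) → ℝ)
    (h' : EuclideanSpace ℝ (Fin N) → EuclideanSpace ℝ (Fin N))
    (hconv : ConvexOn ℝ Set.univ h)
    (hgrad : ∀ x, HasGradientAt h (h' x) x) :
    (∀ (u v w : EuclideanSpace ℝ (Fin N)) (θ : ℝ), θ ∈ Set.Icc (0:ℝ) 1 →
        breg h h' (u + θ • (v - w)) u ≤ θ ^ γ * breg h h' v w) ↔
      (∀ (u v w : EuclideanSpace ℝ (Fin N)) (θ : ℝ), θ ∈ Set.Icc (0:ℝ) 1 →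
        breg h h' ((1 - θ) • u + θ • v) ((1 - θ) • u + θ • w) ≤ θ ^ γ * breg h h' v w) :=
  gti_iff_tsp_general N γ h h' hgrad
end

section
/- The Itakura–Saito distance D_IS(x,y) = -log(x/y) + x/y - 1 on ℝ₊₊ is scale invariant: D_IS(θv, θw) = D_IS(v,w) for all θ > 0 and v, w > 0. Consequently, if γ > 0 then there exist u, v, w > 0 and θ ∈ (0,1) such that D_IS(u + θ(v-w), u) > θ^γ D_IS(v,w), i.e., D_IS does not satisfy the generalized translation invariant property with any γ > 0. -/
noncomputable def dIS (x y : ℝ) : ℝ := -Real.log (x / y) + x / y - 1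

/-! `dIS x y` depends only on the ratio `x / y`, whence scale invariance. For the failure of the
translation property take `u = v = 1`, `w = 2`, `θ = 1/2`: then `u + θ (v - w) = 1/2` and, by
scale invariance, `dIS v w = dIS (1/2) 1` as well, so the inequality would force the positive
number `dIS (1/2) 1` to be at most `θ ^ γ < 1` times itself. -/

theorem dIS_mul_mul {θ : ℝ} (hθ : θ ≠ 0) (v w : ℝ) : dIS (θ * v) (θ * w) = dIS v w := by
  rw [dIS, dIS, mul_div_mul_left v w hθ]

theorem dIS_pos {x y : ℝ} (hx : 0 < x) (hy : 0 < y) (hxy : x ≠ y) : 0 < dIS x y := by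
  have hlog : Real.log (x / y) < x / y - 1 :=
    Real.log_lt_sub_one_of_pos (div_pos hx hy) (by rwa [Ne, div_eq_one_iff_eq hy.ne'])
  rw [dIS]
  linarith

/-- The Itakura–Saito distance is scale invariant, and consequently it fails the
generalized translation invariant property for every exponent `γ > 0`. -/
theorem is_scale_invariant_and_no_gti :
    (∀ θ v w : ℝ, 0 < θ → 0 < v → 0 < w → dIS (θ * v) (θ * w) = dIS v w) ∧
      ∀ γ : ℝ, 0 < γ →
        ∃ u v w θ : ℝ, 0 < u ∧ 0 < v ∧ 0 < w ∧ 0 < θ ∧ θ < 1 ∧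
          0 < u + θ * (v - w) ∧
          θ ^ γ * dIS v w < dIS (u + θ * (v - w)) u := by
  refine ⟨fun θ v w hθ _ _ => dIS_mul_mul hθ.ne' v w, fun γ hγ => ?_⟩
  have hvw : dIS 1 2 = dIS (1 / 2) 1 := by
    simpa using dIS_mul_mul (two_ne_zero (α := ℝ)) (1 / 2) 1
  have hθγ : (1 / 2 : ℝ) ^ γ < 1 := Real.rpow_lt_one (by norm_num) (by norm_num) hγ
  refine ⟨1, 1, 2, 1 / 2, by norm_num, by norm_num, by norm_num, by norm_num, by norm_num,
    by norm_num, ?_⟩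
  rw [show (1 : ℝ) + 1 / 2 * (1 - 2) = 1 / 2 by norm_num, hvw]
  exact mul_lt_of_lt_one_left (dIS_pos (by norm_num) one_pos (by norm_num)) hθγ
end

section
/- Block coordinate descent lemma: let F = f + r with r convex and block separable, and suppose (f_i, h_i) is relatively smooth with constant L_i. If the i-th block of x⁺ equals T_i(x) = argmin_{u_i} ⟨∇_i f(x), u_i - x_i⟩ + (1/α) D_h(u_i, x_i) + r_i(u_i) and the other blocks are unchanged, then F(x⁺) ≤ F(x) - ((1+θ_i)/α - L_i)·D_h(T_i(x), x_i), where θ_i is the symmetry coefficient of h_i. In particular, F(x⁺) < F(x) holds whenever 0 < α < (1+θ_i)/L_i and T_i(x) ≠ x_i. -/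
open Set

theorem Fintype.sum_apply_update {ι M : Type*} [Fintype ι] [DecidableEq ι] [AddCommGroup M]
    {β : ι → Type*} (r : ∀ j, β j → M) (x : ∀ j, β j) (i : ι) (b : β i) :
    ∑ j, r j (Function.update x i b j) = ∑ j, r j (x j) + (r i b - r i (x i)) := by
  rw [← Finset.add_sum_erase _ _ (Finset.mem_univ i),
    ← Finset.add_sum_erase _ _ (Finset.mem_univ i),
    Finset.sum_congr rfl fun j hj => by rw [Function.update_of_ne (Finset.ne_of_mem_erase hj)]]
  simp only [Function.update_self]
  abel

section Convex

variable {E : Type*} [NormedAddCommGroup E] [InnerProductSpace ℝ E] [CompleteSpace E]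
  {f : E → ℝ} {g a : E}

theorem ConvexOn.inner_gradient_le_sub (hf : ConvexOn ℝ univ f) (hg : HasGradientAt f g a)
    (b : E) : inner ℝ g (b - a) ≤ f b - f a := by
  set ℓ : ℝ →ᵃ[ℝ] E := AffineMap.lineMap a b
  have hline : ConvexOn ℝ univ (f ∘ ℓ) := hf.comp_affineMap ℓ
  have hderiv : HasDerivAt (f ∘ ℓ) (inner ℝ g (b - a)) 0 := by
    have hfun : f ∘ ℓ = fun t : ℝ => f (a + t • (b - a)) := by
      ext t
      simp [ℓ, AffineMap.lineMap_apply_module', add_comm]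
    rw [hfun]
    exact (hasGradientAt_iff_hasFDerivAt.mp hg).hasLineDerivAt (b - a)
  simpa [ℓ, slope_def_field] using
    hline.le_slope_of_hasDerivAt (mem_univ (0 : ℝ)) (mem_univ 1) zero_lt_one hderiv

theorem StrictConvexOn.inner_gradient_lt_sub (hf : StrictConvexOn ℝ univ f)
    (hg : HasGradientAt f g a) {b : E} (hab : a ≠ b) : inner ℝ g (b - a) < f b - f a := by
  have hmid := hf.2 (mem_univ a) (mem_univ b) hab (half_pos one_pos) (half_pos one_pos)
    (add_halves 1)
  have hle := hf.convexOn.inner_gradient_le_sub hg ((1 / 2 : ℝ) • a + (1 / 2 : ℝ) • b)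
  rw [show (1 / 2 : ℝ) • a + (1 / 2 : ℝ) • b - a = (1 / 2 : ℝ) • (b - a) by module,
    real_inner_smul_right] at hle
  simp only [smul_eq_mul] at hmid
  linarith

theorem hasGradientAt_inner_sub (g a y : E) : HasGradientAt (fun u => inner ℝ g (u - a)) g y := by
  rw [hasGradientAt_iff_hasFDerivAt]
  refine ((InnerProductSpace.toDual ℝ E g).hasFDerivAt.sub_const (inner ℝ g a))
    |>.congr_of_eventuallyEq (Filter.Eventually.of_forall fun u => ?_)
  simp [inner_sub_right]

end Convex

theorem IsMinOn.sub_le_fderiv_of_convexOn {E : Type*} [NormedAddCommGroup E] [NormedSpace ℝ E]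
    {s r : E → ℝ} {s' : E →L[ℝ] ℝ} {C : Set E} {T u : E} (hmin : IsMinOn (s + r) C T)
    (hs : HasFDerivAt s s' T) (hr : ConvexOn ℝ C r) (hT : T ∈ C) (hu : u ∈ C) :
    r T - r u ≤ s' (u - T) := by
  -- Bounding `r` by its chord on `[T, u]` shows that `φ` is minimal on `[0, 1]` at `0`.
  set φ : ℝ → ℝ := fun t => s (T + t • (u - T)) + t * (r u - r T)
  have hφ : HasDerivAt φ (s' (u - T) + (r u - r T)) 0 := by
    have := (hs.hasLineDerivAt (u - T)).fun_add ((hasDerivAt_id (0 : ℝ)).mul_const (r u - r T))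
    rw [one_mul] at this
    exact this
  have hφmin : IsLocalMinOn φ (Icc 0 1) 0 := by
    refine IsMinOn.localize fun t ht => ?_
    have hseg : T + t • (u - T) = (1 - t) • T + t • u := by module
    have hrt := hr.2 hT hu (sub_nonneg.mpr ht.2) ht.1 (sub_add_cancel 1 t)
    have hst := hmin (hr.1 hT hu (sub_nonneg.mpr ht.2) ht.1 (sub_add_cancel 1 t))
    simp only [Set.mem_ofPred_eq, Pi.add_apply, smul_eq_mul] at hrt hst
    simp only [φ, Set.mem_ofPred_eq, hseg, zero_smul, add_zero, zero_mul]
    linarith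
  have hderiv_nonneg := hφmin.hasFDerivWithinAt_nonneg hφ.hasFDerivAt.hasFDerivWithinAt
    (y := 1) (mem_posTangentConeAt_of_segment_subset (by simp [segment_eq_Icc]))
  rw [ContinuousLinearMap.toSpanSingleton_apply, one_smul] at hderiv_nonneg
  linarith

section Bregman

variable {N : ℕ} {h : EuclideanSpace ℝ (Fin N) → ℝ}
  {h' : EuclideanSpace ℝ (Fin N) → EuclideanSpace ℝ (Fin N)}

@[simp]
theorem breg_self (x : EuclideanSpace ℝ (Fin N)) : breg h h' x x = 0 := by
  simp [breg]

theorem breg_pos (hh : StrictConvexOn ℝ univ h) {x y : EuclideanSpace ℝ (Fin N)}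
    (hy : HasGradientAt h (h' y) y) (hxy : x ≠ y) : 0 < breg h h' x y :=
  sub_pos.mpr (hh.inner_gradient_lt_sub hy hxy.symm)

theorem breg_three_point (u v w : EuclideanSpace ℝ (Fin N)) :
    breg h h' u w = breg h h' u v + breg h h' v w + inner ℝ (h' v - h' w) (u - v) := by
  simp only [breg, inner_sub_left, inner_sub_right]
  ring

theorem hasGradientAt_breg_left {x y : EuclideanSpace ℝ (Fin N)} (hy : HasGradientAt h (h' y) y) :
    HasGradientAt (fun u => breg h h' u x) (h' y - h' x) y := by
  rw [hasGradientAt_iff_hasFDerivAt, map_sub]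
  exact (((hasGradientAt_iff_hasFDerivAt.mp hy).sub_const (h x)).sub
    (hasGradientAt_iff_hasFDerivAt.mp (hasGradientAt_inner_sub (h' x) x y))).congr_of_eventuallyEq
    (Filter.Eventually.of_forall fun u => rfl)

theorem breg_prox_three_point {r : EuclideanSpace ℝ (Fin N) → ℝ}
    {g a T : EuclideanSpace ℝ (Fin N)} {c : ℝ} (hr : ConvexOn ℝ univ r) (hT : HasGradientAt h (h' T) T)
    (hmin : ∀ u, inner ℝ g (T - a) + c * breg h h' T a + r T ≤
      inner ℝ g (u - a) + c * breg h h' u a + r u) (u : EuclideanSpace ℝ (Fin N)) :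
    inner ℝ g (T - a) + c * breg h h' T a + r T + c * breg h h' u T ≤
      inner ℝ g (u - a) + c * breg h h' u a + r u := by
  have hs : HasGradientAt (fun u => inner ℝ g (u - a) + c * breg h h' u a)
      (g + c • (h' T - h' a)) T := by
    rw [hasGradientAt_iff_hasFDerivAt, map_add, map_smulₛₗ]
    exact (hasGradientAt_iff_hasFDerivAt.mp (hasGradientAt_inner_sub g a T)).add
      ((hasGradientAt_iff_hasFDerivAt.mp (hasGradientAt_breg_left hT)).const_mul c)
  have hopt := IsMinOn.sub_le_fderiv_of_convexOn (isMinOn_iff.mpr fun u _ => hmin u)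
    (hasGradientAt_iff_hasFDerivAt.mp hs) hr (mem_univ T) (mem_univ u)
  rw [InnerProductSpace.toDual_apply_apply, inner_add_left, real_inner_smul_left] at hopt
  have hsplit : inner ℝ g (u - a) = inner ℝ g (u - T) + inner ℝ g (T - a) := by
    rw [← inner_add_right, sub_add_sub_cancel]
  rw [breg_three_point u T a, hsplit]
  linear_combination hopt

end Bregman

theorem block_bregman_descent_general (n : ℕ) (N : Fin n → ℕ)
    (f : (∀ j, EuclideanSpace ℝ (Fin (N j))) → ℝ)
    (r : ∀ j, EuclideanSpace ℝ (Fin (N j)) → ℝ)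
    (h : ∀ j, EuclideanSpace ℝ (Fin (N j)) → ℝ)
    (h' : ∀ j, EuclideanSpace ℝ (Fin (N j)) → EuclideanSpace ℝ (Fin (N j)))
    (L θ : Fin n → ℝ) (α : ℝ) (i : Fin n)
    (x : ∀ j, EuclideanSpace ℝ (Fin (N j)))
    (Ti : EuclideanSpace ℝ (Fin (N i)))
    (gradf : ∀ j, (∀ k, EuclideanSpace ℝ (Fin (N k))) → EuclideanSpace ℝ (Fin (N j)))
    (hr : ∀ j, ConvexOn ℝ Set.univ (r j))
    (hstrict : ∀ j, StrictConvexOn ℝ Set.univ (h j))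
    (hgrad : ∀ j y, HasGradientAt (h j) (h' j y) y)
    (hL : ∀ j, 0 < L j)
    -- relative smoothness of (fᵢ, hᵢ) with constant Lᵢ (descent-lemma form)
    (hsmooth : ∀ u, f (Function.update x i u) ≤
      f x + (inner ℝ (gradf i x) (u - x i) : ℝ) + L i * breg (h i) (h' i) u (x i))
    -- θᵢ is a lower bound realizing the symmetry coefficient of hᵢ
    (hθ : ∀ j a b, θ j * breg (h j) (h' j) b a ≤ breg (h j) (h' j) a b)
    (hα : 0 < α)
    -- Tᵢ minimizes the block Bregman proximal subproblem
    (hTi : ∀ u, (inner ℝ (gradf i x) (Ti - x i) : ℝ) + (1/α) * breg (h i) (h' i) Ti (x i) + r i Ti ≤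
      (inner ℝ (gradf i x) (u - x i) : ℝ) + (1/α) * breg (h i) (h' i) u (x i) + r i u) :
    (f (Function.update x i Ti) + ∑ j, r j (Function.update x i Ti j) ≤
        f x + ∑ j, r j (x j) - ((1 + θ i) / α - L i) * breg (h i) (h' i) Ti (x i)) ∧
      (α < (1 + θ i) / L i → Ti ≠ x i →
        f (Function.update x i Ti) + ∑ j, r j (Function.update x i Ti j) <
          f x + ∑ j, r j (x j)) := by
  set D := breg (h i) (h' i) Ti (x i)
  have hprox := breg_prox_three_point (hr i) (hgrad i Ti) hTi (x i)
  simp only [sub_self, inner_zero_right, breg_self, mul_zero, zero_add] at hprox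
  have hsym : 1 / α * (θ i * D) ≤ 1 / α * breg (h i) (h' i) (x i) Ti :=
    mul_le_mul_of_nonneg_left (hθ i (x i) Ti) (by positivity)
  have hdescent : f (Function.update x i Ti) + ∑ j, r j (Function.update x i Ti j) ≤
      f x + ∑ j, r j (x j) - ((1 + θ i) / α - L i) * D := by
    rw [Fintype.sum_apply_update]
    linear_combination hsmooth Ti + hprox + hsym
  refine ⟨hdescent, fun hαθ hne => ?_⟩
  have hD : 0 < D := breg_pos (hstrict i) (hgrad i (x i)) hne
  have hcoef : 0 < (1 + θ i) / α - L i := by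
    rw [sub_pos, lt_div_iff₀ hα]
    rwa [lt_div_iff₀ (hL i), mul_comm] at hαθ
  linarith [mul_pos hcoef hD]

/-- Block Bregman coordinate descent lemma (Lemma 3 of the paper): a single block
Bregman proximal update with stepsize α decreases F = f + Σⱼ rⱼ by at least
((1+θᵢ)/α - Lᵢ)·D_h(Tᵢ(x), xᵢ); in particular strict descent holds when
0 < α < (1+θᵢ)/Lᵢ and Tᵢ(x) ≠ xᵢ. -/
theorem block_bregman_descent (n : ℕ) (N : Fin n → ℕ)
    (f : (∀ j, EuclideanSpace ℝ (Fin (N j))) → ℝ)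
    (r : ∀ j, EuclideanSpace ℝ (Fin (N j)) → ℝ)
    (h : ∀ j, EuclideanSpace ℝ (Fin (N j)) → ℝ)
    (h' : ∀ j, EuclideanSpace ℝ (Fin (N j)) → EuclideanSpace ℝ (Fin (N j)))
    (L θ : Fin n → ℝ) (α : ℝ) (i : Fin n)
    (x : ∀ j, EuclideanSpace ℝ (Fin (N j)))
    (Ti : EuclideanSpace ℝ (Fin (N i)))
    (gradf : ∀ j, (∀ k, EuclideanSpace ℝ (Fin (N k))) → EuclideanSpace ℝ (Fin (N j)))
    (hr : ∀ j, ConvexOn ℝ Set.univ (r j))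
    (hstrict : ∀ j, StrictConvexOn ℝ Set.univ (h j))
    (hgrad : ∀ j y, HasGradientAt (h j) (h' j y) y)
    (hgradf : ∀ j (y : ∀ k, EuclideanSpace ℝ (Fin (N k))),
      HasGradientAt (fun u => f (Function.update y j u)) (gradf j y) (y j))
    (hL : ∀ j, 0 < L j)
    -- relative smoothness of (fᵢ, hᵢ) with constant Lᵢ (descent-lemma form)
    (hsmooth : ∀ u, f (Function.update x i u) ≤
      f x + (inner ℝ (gradf i x) (u - x i) : ℝ) + L i * breg (h i) (h' i) u (x i))
    -- θᵢ is a lower bound realizing the symmetry coefficient of hᵢ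
    (hθ : ∀ j a b, θ j * breg (h j) (h' j) b a ≤ breg (h j) (h' j) a b)
    (hα : 0 < α)
    -- Tᵢ minimizes the block Bregman proximal subproblem
    (hTi : ∀ u, (inner ℝ (gradf i x) (Ti - x i) : ℝ) + (1/α) * breg (h i) (h' i) Ti (x i) + r i Ti ≤
      (inner ℝ (gradf i x) (u - x i) : ℝ) + (1/α) * breg (h i) (h' i) u (x i) + r i u) :
    (f (Function.update x i Ti) + ∑ j, r j (Function.update x i Ti j) ≤
        f x + ∑ j, r j (x j) - ((1 + θ i) / α - L i) * breg (h i) (h' i) Ti (x i)) ∧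
      (α < (1 + θ i) / L i → Ti ≠ x i →
        f (Function.update x i Ti) + ∑ j, r j (Function.update x i Ti j) <
          f x + ∑ j, r j (x j)) :=
  block_bregman_descent_general n N f r h h' L θ α i x Ti gradf hr hstrict hgrad hL hsmooth hθ hα
    hTi
end

section
/- A point x is a stationary point of F = f + r (i.e., 0 ∈ ∇f(x) + ∂r(x)) if and only if D_H(T(x), x) = 0, where T(x) = argmin_u ⟨∇f(x), u - x⟩ + D_H(u,x) + r(u) and H(x) = Σᵢ Lᵢhᵢ(xᵢ). -/
/-!
Since `H` is strictly convex, `D_H(·, x)` is nonnegative and vanishes only at `x`; since `H` is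
differentiable at `x`, it is also flat to first order there. If `-∇f(x)` is a subgradient of `r`
at `x`, comparing `T(x)` with `x` in the minimisation defining `T(x)` forces `D_H(T(x), x) ≤ 0`.
Conversely, if `D_H(T(x), x) = 0` then `T(x) = x`, so `x` minimises `u ↦ ⟨∇f(x), u - x⟩ +
D_H(u, x) + r(u)`; moving from `x` towards any `y` and using convexity of `r` together with the
first-order flatness of `D_H(·, x)` gives the subgradient inequality.
-/

open Set Filter Topology

section Gradient

variable {E : Type*} [NormedAddCommGroup E] [InnerProductSpace ℝ E] [CompleteSpace E]

theorem HasGradientAt.hasDerivAt_comp_lineMap {f : E → ℝ} {g x : E} (hf : HasGradientAt f g x)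
    (y : E) : HasDerivAt (fun t : ℝ => f (AffineMap.lineMap x y t)) (inner ℝ g (y - x)) 0 := by
  have hf' : HasFDerivAt f (InnerProductSpace.toDual ℝ E g) (AffineMap.lineMap x y (0 : ℝ)) := by
    simpa using hf.hasFDerivAt
  have hℓ : HasDerivAt (AffineMap.lineMap x y : ℝ → E) (y - x) 0 := AffineMap.hasDerivAt_lineMap
  have hcomp := hf'.comp_hasDerivAt (0 : ℝ) hℓ
  rwa [InnerProductSpace.toDual_apply_apply] at hcomp

theorem ConvexOn.inner_sub_le_sub_of_hasGradientAt {f : E → ℝ} {g x : E}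
    (hconv : ConvexOn ℝ univ f) (hf : HasGradientAt f g x) (y : E) :
    inner ℝ g (y - x) ≤ f y - f x := by
  have hline : ConvexOn ℝ univ (fun t : ℝ => f (AffineMap.lineMap x y t)) :=
    hconv.comp_affineMap (AffineMap.lineMap x y)
  simpa [slope_def_field] using
    hline.le_slope_of_hasDerivAt (mem_univ 0) (mem_univ 1) one_pos (hf.hasDerivAt_comp_lineMap y)

theorem StrictConvexOn.inner_sub_lt_sub_of_hasGradientAt {f : E → ℝ} {g x : E}
    (hconv : StrictConvexOn ℝ univ f) (hf : HasGradientAt f g x) {y : E} (hxy : y ≠ x) :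
    inner ℝ g (y - x) < f y - f x := by
  -- apply the convex gradient inequality at the midpoint, where strict convexity gives slack
  set m : E := (1 / 2 : ℝ) • x + (1 / 2 : ℝ) • y
  have hmid : f m < 1 / 2 * f x + 1 / 2 * f y :=
    hconv.2 (mem_univ x) (mem_univ y) hxy.symm (by norm_num) (by norm_num) (by norm_num)
  have hgrad := hconv.convexOn.inner_sub_le_sub_of_hasGradientAt hf m
  have hm : m - x = (1 / 2 : ℝ) • (y - x) := by simp only [m, smul_sub]; module
  rw [hm, real_inner_smul_right] at hgrad
  linarith

theorem ConvexOn.le_add_inner_neg_of_isMinOn_add {ψ r : E → ℝ} {g x : E}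
    (hr : ConvexOn ℝ univ r) (hψ : HasGradientAt ψ g x) (hmin : IsMinOn (ψ + r) univ x)
    (y : E) : r x + inner ℝ (-g) (y - x) ≤ r y := by
  set ℓ : ℝ →ᵃ[ℝ] E := AffineMap.lineMap x y
  have hslope : Tendsto (fun t : ℝ => t⁻¹ * (ψ (ℓ t) - ψ x)) (𝓝[>] 0) (𝓝 (inner ℝ g (y - x))) := by
    simpa [ℓ] using (hψ.hasDerivAt_comp_lineMap y).tendsto_slope_zero_right
  have hbound : ∀ t ∈ Ioo (0 : ℝ) 1, r x - r y ≤ t⁻¹ * (ψ (ℓ t) - ψ x) := by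
    rintro t ⟨ht0, ht1⟩
    have hmin_t : ψ x + r x ≤ ψ (ℓ t) + r (ℓ t) := isMinOn_univ_iff.mp hmin (ℓ t)
    have hr_t : r (ℓ t) ≤ (1 - t) * r x + t * r y := by
      simpa [ℓ, AffineMap.lineMap_apply_module] using
        hr.2 (mem_univ x) (mem_univ y) (by linarith) ht0.le (by ring)
    rw [le_inv_mul_iff₀ ht0]
    linarith
  have hlim : r x - r y ≤ inner ℝ g (y - x) := by
    refine ge_of_tendsto hslope ?_
    filter_upwards [Ioo_mem_nhdsGT one_pos] with t ht using hbound t ht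
  rw [inner_neg_left]
  linarith

end Gradient

section Bregman

variable {N : ℕ} {H : EuclideanSpace ℝ (Fin N) → ℝ}
  {H' : EuclideanSpace ℝ (Fin N) → EuclideanSpace ℝ (Fin N)} {x y : EuclideanSpace ℝ (Fin N)}

@[simp]
theorem breg_self_s11 : breg H H' x x = 0 := by
  simp [breg]

theorem breg_nonneg (hH : ConvexOn ℝ univ H) (hH' : HasGradientAt H (H' x) x)
    (y : EuclideanSpace ℝ (Fin N)) : 0 ≤ breg H H' y x := by
  have := hH.inner_sub_le_sub_of_hasGradientAt hH' y
  unfold breg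
  linarith

theorem breg_eq_zero_iff (hH : StrictConvexOn ℝ univ H) (hH' : HasGradientAt H (H' x) x) :
    breg H H' y x = 0 ↔ y = x := by
  refine ⟨fun h => ?_, fun h => h ▸ breg_self_s11⟩
  by_contra hxy
  have := hH.inner_sub_lt_sub_of_hasGradientAt hH' hxy
  unfold breg at h
  linarith

theorem hasGradientAt_inner_sub_add_breg (hH' : HasGradientAt H (H' x) x)
    (g : EuclideanSpace ℝ (Fin N)) :
    HasGradientAt (fun u => inner ℝ g (u - x) + breg H H' u x) g x := by
  rw [hasGradientAt_iff_isLittleO] at hH' ⊢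
  refine hH'.congr_left fun u => ?_
  simp only [breg, sub_self, inner_zero_right]
  ring

end Bregman

theorem stationary_iff_bregman_gap_zero_general (N : ℕ)
    (r H : EuclideanSpace ℝ (Fin N) → ℝ)
    (H' : EuclideanSpace ℝ (Fin N) → EuclideanSpace ℝ (Fin N))
    (gf : EuclideanSpace ℝ (Fin N) → EuclideanSpace ℝ (Fin N))
    (hr : ConvexOn ℝ Set.univ r)
    (hHstrict : StrictConvexOn ℝ Set.univ H)
    (hHgrad : ∀ x, HasGradientAt H (H' x) x)
    (x Tx : EuclideanSpace ℝ (Fin N))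
    -- Tx minimizes u ↦ ⟨∇f(x), u - x⟩ + D_H(u, x) + r(u)
    (hT : ∀ u, (inner ℝ (gf x) (Tx - x) : ℝ) + breg H H' Tx x + r Tx ≤
      (inner ℝ (gf x) (u - x) : ℝ) + breg H H' u x + r u) :
    (∃ v : EuclideanSpace ℝ (Fin N),
        (∀ y, r x + (inner ℝ v (y - x) : ℝ) ≤ r y) ∧ gf x + v = 0) ↔
      breg H H' Tx x = 0 := by
  constructor
  · rintro ⟨v, hsub, hv⟩
    rw [eq_neg_of_add_eq_zero_right hv] at hsub
    have hsub_Tx := hsub Tx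
    have hT_x := hT x
    simp only [sub_self, inner_zero_right, breg_self_s11, inner_neg_left] at hsub_Tx hT_x
    exact le_antisymm (by linarith) (breg_nonneg hHstrict.convexOn (hHgrad x) Tx)
  · intro hgap
    obtain rfl : Tx = x := (breg_eq_zero_iff hHstrict (hHgrad x)).mp hgap
    have hmin : IsMinOn ((fun u => inner ℝ (gf Tx) (u - Tx) + breg H H' u Tx) + r) univ Tx :=
      isMinOn_univ_iff.mpr fun u => hT u
    exact ⟨-gf Tx, hr.le_add_inner_neg_of_isMinOn_add
      (hasGradientAt_inner_sub_add_breg (hHgrad Tx) (gf Tx)) hmin, add_neg_cancel _⟩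

/-- x is a stationary point of F = f + r (i.e. 0 ∈ ∇f(x) + ∂r(x)) iff
D_H(T(x), x) = 0, where T(x) is the full Bregman proximal mapping. -/
theorem stationary_iff_bregman_gap_zero (N : ℕ)
    (f r H : EuclideanSpace ℝ (Fin N) → ℝ)
    (H' : EuclideanSpace ℝ (Fin N) → EuclideanSpace ℝ (Fin N))
    (gf : EuclideanSpace ℝ (Fin N) → EuclideanSpace ℝ (Fin N))
    (hr : ConvexOn ℝ Set.univ r)
    (hHstrict : StrictConvexOn ℝ Set.univ H)
    (hHgrad : ∀ x, HasGradientAt H (H' x) x)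
    (hfgrad : ∀ x, HasGradientAt f (gf x) x)
    (x Tx : EuclideanSpace ℝ (Fin N))
    -- Tx minimizes u ↦ ⟨∇f(x), u - x⟩ + D_H(u, x) + r(u)
    (hT : ∀ u, (inner ℝ (gf x) (Tx - x) : ℝ) + breg H H' Tx x + r Tx ≤
      (inner ℝ (gf x) (u - x) : ℝ) + breg H H' u x + r u) :
    (∃ v : EuclideanSpace ℝ (Fin N),
        (∀ y, r x + (inner ℝ v (y - x) : ℝ) ≤ r y) ∧ gf x + v = 0) ↔
      breg H H' Tx x = 0 :=
  stationary_iff_bregman_gap_zero_general N r H H' gf hr hHstrict hHgrad x Tx hT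
end

section
/- For γ ≥ 1, the sequence β_k = γ/(k+γ) satisfies (1 - β_{k+1})/β_{k+1}^γ ≤ 1/β_k^γ for all k ≥ 0. -/
/-!
With `b = k + 1 + γ` one has `β (k + 1) = γ / b` and `β k = γ / (b - 1)`, so after clearing the
common factor `γ ^ γ` the claim reads `b ^ (γ - 1) * (b - γ) ≤ (b - 1) ^ γ`. This is the tangent
line bound for the convex function `x ↦ x ^ γ` at `b`, i.e. Bernoulli's inequality
`1 - γ / b ≤ (1 - 1 / b) ^ γ` multiplied by `b ^ γ`.
-/

open Real

theorem rpow_sub_one_mul_sub_le_sub_one_rpow {p b : ℝ} (hp : 1 ≤ p) (hb : 1 ≤ b) :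
    b ^ (p - 1) * (b - p) ≤ (b - 1) ^ p := by
  have hb0 : 0 < b := by linarith
  have bernoulli : 1 + p * (-1 / b) ≤ (1 + -1 / b) ^ p :=
    one_add_mul_self_le_rpow_one_add (by rw [neg_div, neg_le_neg_iff, div_le_one hb0]; exact hb) hp
  have hsub : 0 ≤ 1 + -1 / b := by
    rw [neg_div, ← sub_eq_add_neg, sub_nonneg, div_le_one hb0]; exact hb
  calc b ^ (p - 1) * (b - p) = (1 + p * (-1 / b)) * b ^ p := by
        rw [rpow_sub_one hb0.ne']; field_simp; ring
    _ ≤ (1 + -1 / b) ^ p * b ^ p := by gcongr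
    _ = (b - 1) ^ p := by
        rw [← mul_rpow hsub hb0.le]; congr 1; field_simp; ring

theorem one_div_div_rpow_self {γ c : ℝ} (hγ : 0 < γ) (hc : 0 < c) :
    1 / (γ / c) ^ γ = c ^ γ / γ ^ γ := by
  rw [div_rpow hγ.le hc.le, one_div_div]

theorem one_sub_div_div_div_rpow_self {γ c : ℝ} (hγ : 0 < γ) (hc : 0 < c) :
    (1 - γ / c) / (γ / c) ^ γ = c ^ (γ - 1) * (c - γ) / γ ^ γ := by
  rw [div_rpow hγ.le hc.le, rpow_sub_one hc.ne']
  field_simp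

/-- The sequence β_k = γ/(k+γ) satisfies (1-β_{k+1})/β_{k+1}^γ ≤ 1/β_k^γ for γ ≥ 1. -/
theorem beta_seq_condition (γ : ℝ) (hγ : 1 ≤ γ) (β : ℕ → ℝ)
    (hβ : ∀ k : ℕ, β k = γ / ((k : ℝ) + γ)) :
    ∀ k : ℕ, (1 - β (k + 1)) / β (k + 1) ^ γ ≤ 1 / β k ^ γ := by
  intro k
  have hγ0 : 0 < γ := by linarith
  set b : ℝ := (k : ℝ) + 1 + γ
  have hb : 1 < b := by
    have hk : (0 : ℝ) ≤ k := k.cast_nonneg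
    dsimp only [b]; linarith
  have hβ_succ : β (k + 1) = γ / b := by rw [hβ]; push_cast; rfl
  have hβ_self : β k = γ / (b - 1) := by rw [hβ]; congr 1; ring
  rw [hβ_succ, hβ_self, one_sub_div_div_div_rpow_self hγ0 (by linarith),
    one_div_div_rpow_self hγ0 (by linarith)]
  gcongr
  exact rpow_sub_one_mul_sub_le_sub_one_rpow hγ hb.le
end

section
/- Relative smoothness for the Poisson inverse problem: for a nonnegative matrix A ∈ ℝ₊^{M×N} and b ∈ ℝ₊^M, the coordinate function f_j(x_j) = D_KL(b, Ax) (viewed as a function of the j-th coordinate with others fixed, on the domain where all ⟨a_i, x⟩ > 0) satisfies f_j''(x_j) ≤ (Σ_{i=1}^M b_i)·h''(x_j), where h(t) = -log t is the Burg entropy; hence (f_j, h) is relatively smooth with any constant L_j ≥ ‖b‖₁. -/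
open Finset in
/-- Coordinate function of the Poisson inverse objective x ↦ D_KL(b, Ax), as a function
of the j-th coordinate with the others fixed. -/
noncomputable def fjPoisson (M N : ℕ) (A : Matrix (Fin M) (Fin N) ℝ)
    (b : Fin M → ℝ) (x : Fin N → ℝ) (j : Fin N) (t : ℝ) : ℝ :=
  ∑ i, (b i * Real.log (b i / ∑ k, A i k * Function.update x j t k) +
    (∑ k, A i k * Function.update x j t k) - b i)

/-!
Along the `j`-th coordinate, `⟨aᵢ, x⟩ = Aᵢⱼ t + cᵢ` with `cᵢ = ∑_{k ≠ j} Aᵢₖ xₖ ≥ 0`, so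
`fⱼ''(t) = ∑ᵢ bᵢ (Aᵢⱼ / (Aᵢⱼ t + cᵢ))²`, and each ratio `Aᵢⱼ / (Aᵢⱼ t + cᵢ)` is at most `1 / t`.
Hence `fⱼ'' ≤ ‖b‖₁ / t² ≤ L h''`, and the second-derivative test gives convexity of `L h - fⱼ`
on the feasible domain, which is convex because it is upward closed.
-/

open Finset Filter Topology Real

theorem sum_mul_update {ι : Type*} [Fintype ι] [DecidableEq ι] (v x : ι → ℝ) (j : ι) (t : ℝ) :
    ∑ k, v k * Function.update x j t k = v j * t + ∑ k ∈ univ.erase j, v k * x k := by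
  rw [← add_sum_erase _ _ (mem_univ j), Function.update_self]
  congr 1
  exact sum_congr rfl fun k hk => by rw [Function.update_of_ne (ne_of_mem_erase hk)]

noncomputable def scalarKL (b s : ℝ) : ℝ := b * log (b / s) + s - b

theorem hasDerivAt_scalarKL (b : ℝ) {s : ℝ} (hs : s ≠ 0) :
    HasDerivAt (scalarKL b) (1 - b / s) s := by
  have hlog : ∀ u ≠ 0, scalarKL b u = b * log b - b * log u + u - b := by
    intro u hu
    rcases eq_or_ne b 0 with rfl | hb
    · simp [scalarKL]
    · rw [scalarKL, log_div hb hu]; ring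
  have h := ((((hasDerivAt_log hs).const_mul b).const_sub (b * log b)).fun_add
    (hasDerivAt_id' s)).sub_const b
  exact (h.congr_deriv (by ring)).congr_of_eventuallyEq ((eventually_ne_nhds hs).mono hlog)

theorem hasDerivAt_one_sub_div (b : ℝ) {s : ℝ} (hs : s ≠ 0) :
    HasDerivAt (fun s => 1 - b / s) (b / s ^ 2) s := by
  simp only [div_eq_mul_inv]
  exact (((hasDerivAt_inv hs).const_mul b).const_sub 1).congr_deriv (by ring)

theorem hasDerivAt_affine (a c t : ℝ) : HasDerivAt (fun t => a * t + c) a t := by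
  simpa using ((hasDerivAt_id' t).const_mul a).add_const c

theorem div_affine_le_inv {a c t : ℝ} (ha : 0 ≤ a) (hc : 0 ≤ c) (ht : 0 < t) :
    a / (a * t + c) ≤ t⁻¹ := by
  rcases ha.eq_or_lt with rfl | ha
  · simpa using ht.le
  · rw [div_le_iff₀ (by positivity), inv_mul_eq_div, le_div_iff₀ ht]
    linarith [mul_pos ha ht]

theorem isUpperSet_affine_pos {ι : Type*} {a c : ι → ℝ} (ha : ∀ i, 0 ≤ a i) :
    IsUpperSet {t : ℝ | 0 < t ∧ ∀ i, 0 < a i * t + c i} := by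
  rintro s u hsu ⟨hs, hsc⟩
  refine ⟨hs.trans_le hsu, fun i => (hsc i).trans_le ?_⟩
  gcongr
  exact ha i

noncomputable def poissonCoord {ι : Type*} [Fintype ι] (a b c : ι → ℝ) (t : ℝ) : ℝ :=
  ∑ i, scalarKL (b i) (a i * t + c i)

section PoissonCoord

variable {ι : Type*} [Fintype ι] {a b c : ι → ℝ}

theorem hasDerivAt_poissonCoord {t : ℝ} (ht : ∀ i, a i * t + c i ≠ 0) :
    HasDerivAt (poissonCoord a b c) (∑ i, a i * (1 - b i / (a i * t + c i))) t := by
  refine HasDerivAt.fun_sum fun i _ => ?_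
  exact ((hasDerivAt_scalarKL (b i) (ht i)).comp t (hasDerivAt_affine (a i) (c i) t)).congr_deriv
    (mul_comm _ _)

theorem hasDerivAt_deriv_poissonCoord {t : ℝ} (ht : ∀ i, a i * t + c i ≠ 0) :
    HasDerivAt (fun t => ∑ i, a i * (1 - b i / (a i * t + c i)))
      (∑ i, b i * (a i / (a i * t + c i)) ^ 2) t := by
  refine HasDerivAt.fun_sum fun i _ => ?_
  refine (((hasDerivAt_one_sub_div (b i) (ht i)).comp t
    (hasDerivAt_affine (a i) (c i) t)).const_mul (a i)).congr_deriv ?_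
  rw [div_pow]; ring

theorem eventually_affine_ne_zero {t : ℝ} (ht : ∀ i, a i * t + c i ≠ 0) :
    ∀ᶠ s in 𝓝 t, ∀ i, a i * s + c i ≠ 0 :=
  eventually_all.2 fun i =>
    (continuous_const.mul continuous_id |>.add continuous_const).continuousAt.eventually_ne (ht i)

theorem deriv_deriv_poissonCoord {t : ℝ} (ht : ∀ i, a i * t + c i ≠ 0) :
    deriv (deriv (poissonCoord a b c)) t = ∑ i, b i * (a i / (a i * t + c i)) ^ 2 := by
  have hderiv : deriv (poissonCoord a b c) =ᶠ[𝓝 t]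
      fun t => ∑ i, a i * (1 - b i / (a i * t + c i)) :=
    (eventually_affine_ne_zero ht).mono fun s hs => (hasDerivAt_poissonCoord hs).deriv
  rw [hderiv.deriv_eq, (hasDerivAt_deriv_poissonCoord ht).deriv]

theorem sum_mul_div_affine_sq_le (ha : ∀ i, 0 ≤ a i) (hb : ∀ i, 0 ≤ b i) (hc : ∀ i, 0 ≤ c i)
    {t : ℝ} (ht : 0 < t) :
    ∑ i, b i * (a i / (a i * t + c i)) ^ 2 ≤ (∑ i, b i) * (t ^ 2)⁻¹ := by
  rw [sum_mul, ← inv_pow]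
  gcongr with i
  · exact hb i
  · exact div_nonneg (ha i) (add_nonneg (mul_nonneg (ha i) ht.le) (hc i))
  · exact div_affine_le_inv (ha i) (hc i) ht

theorem convexOn_mul_neg_log_sub_poissonCoord (ha : ∀ i, 0 ≤ a i) (hb : ∀ i, 0 ≤ b i)
    (hc : ∀ i, 0 ≤ c i) {L : ℝ} (hL : ∑ i, b i ≤ L) :
    ConvexOn ℝ {t | 0 < t ∧ ∀ i, 0 < a i * t + c i}
      (fun t => L * (-log t) - poissonCoord a b c t) := by
  have hderiv : ∀ t ∈ {t : ℝ | 0 < t ∧ ∀ i, 0 < a i * t + c i},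
      HasDerivAt (fun t => L * (-log t) - poissonCoord a b c t)
        (L * (-t⁻¹) - ∑ i, a i * (1 - b i / (a i * t + c i))) t := fun t ht =>
    ((hasDerivAt_log ht.1.ne').neg.const_mul L).sub
      (hasDerivAt_poissonCoord fun i => (ht.2 i).ne')
  have hderiv2 : ∀ t ∈ {t : ℝ | 0 < t ∧ ∀ i, 0 < a i * t + c i},
      HasDerivAt (fun t => L * (-t⁻¹) - ∑ i, a i * (1 - b i / (a i * t + c i)))
        (L * (t ^ 2)⁻¹ - ∑ i, b i * (a i / (a i * t + c i)) ^ 2) t := fun t ht =>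
    (((hasDerivAt_inv ht.1.ne').neg.const_mul L).congr_deriv (by ring)).sub
      (hasDerivAt_deriv_poissonCoord fun i => (ht.2 i).ne')
  refine convexOn_of_hasDerivWithinAt2_nonneg (isUpperSet_affine_pos ha).ordConnected.convex
    (fun t ht => (hderiv t ht).continuousAt.continuousWithinAt)
    (fun t ht => (hderiv t (interior_subset ht)).hasDerivWithinAt)
    (fun t ht => (hderiv2 t (interior_subset ht)).hasDerivWithinAt) fun t ht => ?_
  have ht := (interior_subset ht).1
  have hbound := sum_mul_div_affine_sq_le ha hb hc ht
  have hL' : (∑ i, b i) * (t ^ 2)⁻¹ ≤ L * (t ^ 2)⁻¹ := by gcongr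
  linarith

end PoissonCoord

theorem fjPoisson_eq_poissonCoord (M N : ℕ) (A : Matrix (Fin M) (Fin N) ℝ)
    (b : Fin M → ℝ) (x : Fin N → ℝ) (j : Fin N) :
    fjPoisson M N A b x j =
      poissonCoord (fun i => A i j) b (fun i => ∑ k ∈ univ.erase j, A i k * x k) := by
  funext t
  simp only [fjPoisson, poissonCoord, scalarKL, sum_mul_update]

/-- Relative smoothness for the Poisson inverse problem: fⱼ''(xⱼ) ≤ (Σᵢ bᵢ)·h''(xⱼ)
with h the Burg entropy (h''(t) = 1/t²); hence for any L ≥ ‖b‖₁ the function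
L·h - fⱼ is convex on the feasible domain. -/
theorem poisson_relative_smooth (M N : ℕ) (A : Matrix (Fin M) (Fin N) ℝ)
    (b : Fin M → ℝ) (x : Fin N → ℝ) (j : Fin N)
    (hA : ∀ i k, 0 ≤ A i k) (hb : ∀ i, 0 ≤ b i) (hx : ∀ k, 0 ≤ x k)
    (hxj : 0 < x j) (hdot : ∀ i, 0 < ∑ k, A i k * x k) :
    deriv (deriv (fjPoisson M N A b x j)) (x j) ≤ (∑ i, b i) * (1 / (x j) ^ 2) ∧
      ∀ L : ℝ, (∑ i, b i) ≤ L →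
        ConvexOn ℝ {t : ℝ | 0 < t ∧ ∀ i, 0 < ∑ k, A i k * Function.update x j t k}
          (fun t => L * (-Real.log t) - fjPoisson M N A b x j t) := by
  have hc : ∀ i, 0 ≤ ∑ k ∈ univ.erase j, A i k * x k := fun i =>
    sum_nonneg fun k _ => mul_nonneg (hA i k) (hx k)
  have hxj_ne : ∀ i, A i j * x j + ∑ k ∈ univ.erase j, A i k * x k ≠ 0 := fun i => by
    rw [← sum_mul_update, Function.update_eq_self]
    exact (hdot i).ne'
  rw [fjPoisson_eq_poissonCoord]
  refine ⟨?_, fun L hL => ?_⟩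
  · rw [deriv_deriv_poissonCoord hxj_ne, one_div]
    exact sum_mul_div_affine_sq_le (fun i => hA i j) hb hc hxj
  · simp only [sum_mul_update]
    exact convexOn_mul_neg_log_sub_poissonCoord (fun i => hA i j) hb hc hL
end

section
/- Relative smoothness for relative-entropy nonnegative regression: for a nonnegative matrix A ∈ ℝ₊^{M×N} and b ∈ ℝ₊₊^M, the coordinate function f_j(x_j) = D_KL(Ax, b) satisfies f_j''(x_j) = Σ_{i=1}^M a_{ij}²/⟨a_i,x⟩ ≤ (Σ_{i=1}^M a_{ij})·(1/x_j), where 1/x_j = h''(x_j) for the Boltzmann–Shannon entropy h(t) = t·log t; hence (f_j, h) is relatively smooth with any constant L_j ≥ Σ_{i=1}^M a_{ij}. -/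
open Finset in
/-- Coordinate function of the relative-entropy regression objective x ↦ D_KL(Ax, b),
as a function of the j-th coordinate with the others fixed. -/
noncomputable def fjRE (M N : ℕ) (A : Matrix (Fin M) (Fin N) ℝ)
    (b : Fin M → ℝ) (x : Fin N → ℝ) (j : Fin N) (t : ℝ) : ℝ :=
  ∑ i, ((∑ k, A i k * Function.update x j t k) *
      Real.log ((∑ k, A i k * Function.update x j t k) / b i) +
    b i - ∑ k, A i k * Function.update x j t k)

/-! Along the `j`-th coordinate line, `⟨aᵢ, x⟩` becomes the affine function `cᵢ + aᵢⱼ t` with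
`cᵢ = Σ_{k ≠ j} aᵢₖ xₖ ≥ 0`. Each summand `y log (y / bᵢ) + bᵢ - y` has second derivative `1 / y`,
so `fⱼ'' t = Σᵢ aᵢⱼ² / (cᵢ + aᵢⱼ t)`, and `aᵢⱼ t ≤ cᵢ + aᵢⱼ t` bounds each term by `aᵢⱼ / t`.
For `L ≥ Σᵢ aᵢⱼ` this makes `(L h - fⱼ)'' ≥ 0` on `t > 0`, where every `cᵢ + aᵢⱼ t` stays positive
because it is positive at `t = xⱼ`. -/

open Real Finset Filter Topology

lemma sum_mul_update_eq {ι R : Type*} [Fintype ι] [DecidableEq ι] [CommSemiring R]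
    (v x : ι → R) (j : ι) (t : R) :
    ∑ k, v k * Function.update x j t k = ∑ k, v k * Function.update x j 0 k + v j * t := by
  rw [← sum_add_sum_compl {j}, ← sum_add_sum_compl {j} (fun k => v k * Function.update x j 0 k)]
  have hx : ∀ k ∈ ({j}ᶜ : Finset ι), Function.update x j t k = Function.update x j 0 k :=
    fun k hk => by simp_all [Function.update_of_ne]
  simp only [sum_singleton, Function.update_self, mul_zero, zero_add, sum_congr rfl
    fun k hk => congrArg (v k * ·) (hx k hk)]
  ring

lemma sq_div_le_div_of_mul_le {a s t : ℝ} (ha : 0 ≤ a) (ht : 0 < t) (hs : a * t ≤ s) :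
    a ^ 2 / s ≤ a / t := by
  rcases ha.eq_or_lt with rfl | ha
  · simp
  calc a ^ 2 / s ≤ a ^ 2 / (a * t) := by gcongr
    _ = a / t := by field_simp

lemma add_mul_pos_of_add_mul_pos {a c s t : ℝ} (ha : 0 ≤ a) (hc : 0 ≤ c) (hs : 0 < s)
    (h : 0 < c + a * s) (ht : 0 < t) : 0 < c + a * t := by
  nlinarith [mul_nonneg ha ht.le, mul_pos h ht]

lemma hasDerivAt_const_add_mul (c a t : ℝ) : HasDerivAt (fun t => c + a * t) a t := by
  simpa using ((hasDerivAt_id' t).const_mul a).const_add c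

noncomputable def klTerm (b y : ℝ) : ℝ := y * log (y / b) + b - y

lemma hasDerivAt_log_div {b y : ℝ} (hb : b ≠ 0) (hy : y ≠ 0) :
    HasDerivAt (fun y => log (y / b)) y⁻¹ y := by
  convert ((hasDerivAt_id' y).div_const b).log (div_ne_zero hy hb) using 1
  field_simp

lemma hasDerivAt_klTerm {b y : ℝ} (hb : b ≠ 0) (hy : y ≠ 0) :
    HasDerivAt (klTerm b) (log (y / b)) y := by
  have h := (((hasDerivAt_id' y).fun_mul (hasDerivAt_log_div hb hy)).add_const b).fun_sub
    (hasDerivAt_id' y)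
  exact h.congr_deriv (by rw [mul_inv_cancel₀ hy]; ring)

section AlongLine

variable {ι : Type*} [Fintype ι] {a b c : ι → ℝ} {t : ℝ}

lemma hasDerivAt_sum_klTerm (hb : ∀ i, b i ≠ 0) (ht : ∀ i, c i + a i * t ≠ 0) :
    HasDerivAt (fun t => ∑ i, klTerm (b i) (c i + a i * t))
      (∑ i, a i * log ((c i + a i * t) / b i)) t :=
  HasDerivAt.fun_sum fun i _ => by
    have h := (hasDerivAt_klTerm (hb i) (ht i)).comp t (hasDerivAt_const_add_mul (c i) (a i) t)
    exact h.congr_deriv (mul_comm _ _)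

lemma hasDerivAt_sum_mul_log_div (hb : ∀ i, b i ≠ 0) (ht : ∀ i, c i + a i * t ≠ 0) :
    HasDerivAt (fun t => ∑ i, a i * log ((c i + a i * t) / b i))
      (∑ i, a i ^ 2 / (c i + a i * t)) t :=
  HasDerivAt.fun_sum fun i _ => by
    have h := ((hasDerivAt_log_div (hb i) (ht i)).comp t
      (hasDerivAt_const_add_mul (c i) (a i) t)).const_mul (a i)
    exact h.congr_deriv (by ring)

lemma sum_sq_div_le_sum_div (ha : ∀ i, 0 ≤ a i) (hc : ∀ i, 0 ≤ c i) (ht : 0 < t) :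
    ∑ i, a i ^ 2 / (c i + a i * t) ≤ (∑ i, a i) / t := by
  rw [sum_div]
  exact sum_le_sum fun i _ => sq_div_le_div_of_mul_le (ha i) ht (le_add_of_nonneg_left (hc i))

lemma hasDerivAt_deriv_sum_klTerm (hb : ∀ i, b i ≠ 0)
    (hne : ∀ᶠ u in 𝓝 t, ∀ i, c i + a i * u ≠ 0) :
    HasDerivAt (deriv fun t => ∑ i, klTerm (b i) (c i + a i * t))
      (∑ i, a i ^ 2 / (c i + a i * t)) t := by
  refine (hasDerivAt_sum_mul_log_div hb hne.self_of_nhds).congr_of_eventuallyEq ?_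
  filter_upwards [hne] with u hu
  exact (hasDerivAt_sum_klTerm hb hu).deriv

lemma convexOn_mul_mul_log_sub_sum_klTerm (hb : ∀ i, b i ≠ 0) (ha : ∀ i, 0 ≤ a i)
    (hc : ∀ i, 0 ≤ c i) (hpos : ∀ u, 0 < u → ∀ i, 0 < c i + a i * u) {L : ℝ}
    (hL : ∑ i, a i ≤ L) :
    ConvexOn ℝ (Set.Ioi 0) (fun t => L * (t * log t) - ∑ i, klTerm (b i) (c i + a i * t)) := by
  have hne : ∀ u ∈ Set.Ioi (0 : ℝ), ∀ i, c i + a i * u ≠ 0 := fun u hu i => (hpos u hu i).ne'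
  have hf' : ∀ u ∈ Set.Ioi (0 : ℝ), HasDerivAt
      (fun t => L * (t * log t) - ∑ i, klTerm (b i) (c i + a i * t))
      (L * (log u + 1) - ∑ i, a i * log ((c i + a i * u) / b i)) u := fun u hu =>
    ((hasDerivAt_mul_log (ne_of_gt hu)).const_mul L).sub (hasDerivAt_sum_klTerm hb (hne u hu))
  have hf'' : ∀ u ∈ Set.Ioi (0 : ℝ), HasDerivAt
      (fun t => L * (log t + 1) - ∑ i, a i * log ((c i + a i * t) / b i))
      (L * u⁻¹ - ∑ i, a i ^ 2 / (c i + a i * u)) u := fun u hu =>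
    (((hasDerivAt_log (ne_of_gt hu)).add_const 1).const_mul L).sub
      (hasDerivAt_sum_mul_log_div hb (hne u hu))
  refine convexOn_of_hasDerivWithinAt2_nonneg (convex_Ioi 0)
    (f' := fun u => L * (log u + 1) - ∑ i, a i * log ((c i + a i * u) / b i))
    (f'' := fun u => L * u⁻¹ - ∑ i, a i ^ 2 / (c i + a i * u))
    (fun u hu => (hf' u hu).continuousAt.continuousWithinAt) ?_ ?_ ?_ <;>
    simp only [interior_Ioi]
  · exact fun u hu => (hf' u hu).hasDerivWithinAt
  · exact fun u hu => (hf'' u hu).hasDerivWithinAt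
  · intro u (hu : 0 < u)
    refine sub_nonneg.2 ?_
    calc ∑ i, a i ^ 2 / (c i + a i * u) ≤ (∑ i, a i) / u := sum_sq_div_le_sum_div ha hc hu
      _ ≤ L * u⁻¹ := by rw [← div_eq_mul_inv]; gcongr

end AlongLine

lemma fjRE_eq_sum_klTerm (M N : ℕ) (A : Matrix (Fin M) (Fin N) ℝ) (b : Fin M → ℝ)
    (x : Fin N → ℝ) (j : Fin N) :
    fjRE M N A b x j =
      fun t => ∑ i, klTerm (b i) (∑ k, A i k * Function.update x j 0 k + A i j * t) := by
  funext t
  simp only [fjRE, klTerm, sum_mul_update_eq _ x j t]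

/-- Relative smoothness for relative-entropy nonnegative regression:
fⱼ''(xⱼ) = Σᵢ aᵢⱼ²/⟨aᵢ,x⟩ ≤ (Σᵢ aᵢⱼ)·(1/xⱼ) = (Σᵢ aᵢⱼ)·h''(xⱼ) with h(t) = t log t;
hence for any L ≥ Σᵢ aᵢⱼ the function L·h - fⱼ is convex on the feasible domain. -/
theorem relative_entropy_relative_smooth (M N : ℕ) (A : Matrix (Fin M) (Fin N) ℝ)
    (b : Fin M → ℝ) (x : Fin N → ℝ) (j : Fin N)
    (hA : ∀ i k, 0 ≤ A i k) (hb : ∀ i, 0 < b i) (hx : ∀ k, 0 ≤ x k)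
    (hxj : 0 < x j) (hdot : ∀ i, 0 < ∑ k, A i k * x k) :
    deriv (deriv (fjRE M N A b x j)) (x j) = (∑ i, (A i j) ^ 2 / ∑ k, A i k * x k) ∧
      (∑ i, (A i j) ^ 2 / ∑ k, A i k * x k) ≤ (∑ i, A i j) * (1 / x j) ∧
      ∀ L : ℝ, (∑ i, A i j) ≤ L →
        ConvexOn ℝ {t : ℝ | 0 < t ∧ ∀ i, 0 < ∑ k, A i k * Function.update x j t k}
          (fun t => L * (t * Real.log t) - fjRE M N A b x j t) := by
  set c : Fin M → ℝ := fun i => ∑ k, A i k * Function.update x j 0 k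
  have hc : ∀ i, 0 ≤ c i := fun i => sum_nonneg fun k _ => mul_nonneg (hA i k) <| by
    rw [Function.update_apply]; split_ifs <;> simp [hx]
  have hcx : ∀ i, c i + A i j * x j = ∑ k, A i k * x k := fun i => by
    simpa using (sum_mul_update_eq (A i) x j (x j)).symm
  have hpos : ∀ t, 0 < t → ∀ i, 0 < c i + A i j * t := fun t ht i =>
    add_mul_pos_of_add_mul_pos (hA i j) (hc i) hxj (hcx i ▸ hdot i) ht
  have hb' : ∀ i, b i ≠ 0 := fun i => (hb i).ne'
  refine ⟨?_, ?_, fun L hL => ?_⟩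
  · have hne : ∀ᶠ t in 𝓝 (x j), ∀ i, c i + A i j * t ≠ 0 := by
      filter_upwards [Ioi_mem_nhds hxj] with t ht i
      exact (hpos t ht i).ne'
    rw [fjRE_eq_sum_klTerm, (hasDerivAt_deriv_sum_klTerm hb' hne).deriv]
    simp only [hcx]
  · simpa only [hcx, mul_one_div] using sum_sq_div_le_sum_div (fun i => hA i j) hc hxj
  · have hS : {t : ℝ | 0 < t ∧ ∀ i, 0 < ∑ k, A i k * Function.update x j t k} = Set.Ioi 0 := by
      ext t
      simp only [Set.mem_ofPred_eq, Set.mem_Ioi, sum_mul_update_eq _ x j t]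
      exact ⟨And.left, fun ht => ⟨ht, hpos t ht⟩⟩
    rw [hS, fjRE_eq_sum_klTerm]
    exact convexOn_mul_mul_log_sub_sum_klTerm hb' (fun i => hA i j) hc hpos hL
end
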